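/- Let V, Q, ρ : ℝ × S¹ → ℝ be smooth and satisfy the evolution equations ∂_τ(e^ρ V_τ) = ∂_θ(e^{2τ−ρ} V_θ) + e^{2(V−τ)+ρ}(Q_τ² − e^{2(τ−ρ)} Q_θ²) and ∂_τ(e^{ρ+2(V−τ)} Q_τ) = ∂_θ(e^{−ρ+2V} Q_θ). Then the quantity A(τ) := ∫_{S¹} e^ρ (V_τ − e^{2(V−τ)} Q_τ Q) dθ is constant in τ. -/

import Mathlib

open MeasureTheory Real

namespace AConsAux

noncomputable def pd1 (f : ℝ → ℝ → ℝ) (τ θ : ℝ) : ℝ :=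
  fderiv ℝ (Function.uncurry f) (τ, θ) (1, 0)

noncomputable def pd2 (f : ℝ → ℝ → ℝ) (τ θ : ℝ) : ℝ :=
  fderiv ℝ (Function.uncurry f) (τ, θ) (0, 1)

lemma hasDerivAt_pd1 {f : ℝ → ℝ → ℝ} (hf : ContDiff ℝ (⊤ : ℕ∞) (Function.uncurry f))
    (τ θ : ℝ) : HasDerivAt (fun s => f s θ) (pd1 f τ θ) τ := by
  have h := ((hf.differentiable (by simp)) (τ, θ)).hasFDerivAt
  have hl : HasDerivAt (fun s : ℝ => (s, θ)) ((1 : ℝ), (0 : ℝ)) τ :=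
    (hasDerivAt_id τ).prodMk (hasDerivAt_const τ θ)
  exact h.comp_hasDerivAt τ hl

lemma hasDerivAt_pd2 {f : ℝ → ℝ → ℝ} (hf : ContDiff ℝ (⊤ : ℕ∞) (Function.uncurry f))
    (τ θ : ℝ) : HasDerivAt (fun y => f τ y) (pd2 f τ θ) θ := by
  have h := ((hf.differentiable (by simp)) (τ, θ)).hasFDerivAt
  have hl : HasDerivAt (fun y : ℝ => (τ, y)) ((0 : ℝ), (1 : ℝ)) θ :=
    (hasDerivAt_const θ τ).prodMk (hasDerivAt_id θ)
  exact h.comp_hasDerivAt θ hl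

lemma contDiff_pd1 {f : ℝ → ℝ → ℝ} (hf : ContDiff ℝ (⊤ : ℕ∞) (Function.uncurry f)) :
    ContDiff ℝ (⊤ : ℕ∞) (Function.uncurry (pd1 f)) :=
  (hf.fderiv_right (by simp)).clm_apply contDiff_const

lemma contDiff_pd2 {f : ℝ → ℝ → ℝ} (hf : ContDiff ℝ (⊤ : ℕ∞) (Function.uncurry f)) :
    ContDiff ℝ (⊤ : ℕ∞) (Function.uncurry (pd2 f)) :=
  (hf.fderiv_right (by simp)).clm_apply contDiff_const

lemma periodic_deriv {f : ℝ → ℝ} {c : ℝ} (hf : Function.Periodic f c) (x : ℝ) :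
    deriv f (x + c) = deriv f x := by
  have h : (fun y => f (y + c)) = f := funext hf
  rw [← deriv_comp_add_const, h]

noncomputable def FF (V Q ρ : ℝ → ℝ → ℝ) (τ θ : ℝ) : ℝ :=
  Real.exp (ρ τ θ) * pd1 V τ θ -
    Real.exp (ρ τ θ + 2 * (V τ θ - τ)) * pd1 Q τ θ * Q τ θ

noncomputable def GG (V Q ρ : ℝ → ℝ → ℝ) (τ θ : ℝ) : ℝ :=
  Real.exp (2 * τ - ρ τ θ) * pd2 V τ θ -
    Real.exp (-ρ τ θ + 2 * V τ θ) * pd2 Q τ θ * Q τ θ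

lemma contDiff_FF {V Q ρ : ℝ → ℝ → ℝ} (hV : ContDiff ℝ (⊤ : ℕ∞) (Function.uncurry V))
    (hQ : ContDiff ℝ (⊤ : ℕ∞) (Function.uncurry Q)) (hρ : ContDiff ℝ (⊤ : ℕ∞) (Function.uncurry ρ)) :
    ContDiff ℝ (⊤ : ℕ∞) (Function.uncurry (FF V Q ρ)) := by
  have h1 := contDiff_pd1 hV
  have h2 := contDiff_pd1 hQ
  exact ((Real.contDiff_exp.comp hρ).mul h1).sub
    (((Real.contDiff_exp.comp (hρ.add (contDiff_const.mul (hV.sub contDiff_fst)))).mul h2).mul hQ)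

lemma contDiff_GG {V Q ρ : ℝ → ℝ → ℝ} (hV : ContDiff ℝ (⊤ : ℕ∞) (Function.uncurry V))
    (hQ : ContDiff ℝ (⊤ : ℕ∞) (Function.uncurry Q)) (hρ : ContDiff ℝ (⊤ : ℕ∞) (Function.uncurry ρ)) :
    ContDiff ℝ (⊤ : ℕ∞) (Function.uncurry (GG V Q ρ)) := by
  have h1 := contDiff_pd2 hV
  have h2 := contDiff_pd2 hQ
  exact ((Real.contDiff_exp.comp ((contDiff_const.mul contDiff_fst).sub hρ)).mul h1).sub
    (((Real.contDiff_exp.comp (hρ.neg.add (contDiff_const.mul hV))).mul h2).mul hQ)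

end AConsAux

open AConsAux

set_option maxHeartbeats 2000000 in
/-- Conservation of `A = ∫_{S¹} e^ρ (V_τ − e^{2(V−τ)} Q_τ Q) dθ` for the T²-symmetric wave system. -/
theorem A_is_conserved
    (V Q ρ : ℝ → ℝ → ℝ)
    (hV : ContDiff ℝ (⊤ : ℕ∞) (Function.uncurry V))
    (hQ : ContDiff ℝ (⊤ : ℕ∞) (Function.uncurry Q))
    (hρ : ContDiff ℝ (⊤ : ℕ∞) (Function.uncurry ρ))
    (hVper : ∀ τ, Function.Periodic (fun θ => V τ θ) (2 * π))
    (hQper : ∀ τ, Function.Periodic (fun θ => Q τ θ) (2 * π))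
    (hρper : ∀ τ, Function.Periodic (fun θ => ρ τ θ) (2 * π))
    (hVeq : ∀ τ θ : ℝ,
      deriv (fun t => Real.exp (ρ t θ) * deriv (fun s => V s θ) t) τ
        = deriv (fun x => Real.exp (2 * τ - ρ τ x) * deriv (fun y => V τ y) x) θ
          + Real.exp (2 * (V τ θ - τ) + ρ τ θ)
            * ((deriv (fun s => Q s θ) τ) ^ 2
              - Real.exp (2 * (τ - ρ τ θ)) * (deriv (fun y => Q τ y) θ) ^ 2))
    (hQeq : ∀ τ θ : ℝ,
      deriv (fun t => Real.exp (ρ t θ + 2 * (V t θ - t)) * deriv (fun s => Q s θ) t) τ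
        = deriv (fun x => Real.exp (-ρ τ x + 2 * V τ x) * deriv (fun y => Q τ y) x) θ) :
    ∀ τ₁ τ₂ : ℝ,
      (∫ θ in (0:ℝ)..(2 * π),
          Real.exp (ρ τ₁ θ)
            * (deriv (fun s => V s θ) τ₁
              - Real.exp (2 * (V τ₁ θ - τ₁)) * deriv (fun s => Q s θ) τ₁ * Q τ₁ θ))
        = ∫ θ in (0:ℝ)..(2 * π),
            Real.exp (ρ τ₂ θ)
              * (deriv (fun s => V s θ) τ₂
                - Real.exp (2 * (V τ₂ θ - τ₂)) * deriv (fun s => Q s θ) τ₂ * Q τ₂ θ) := by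
  intro τ₁ τ₂
  have hVt : ∀ τ θ : ℝ, deriv (fun s => V s θ) τ = pd1 V τ θ :=
    fun τ θ => (hasDerivAt_pd1 hV τ θ).deriv
  have hQt : ∀ τ θ : ℝ, deriv (fun s => Q s θ) τ = pd1 Q τ θ :=
    fun τ θ => (hasDerivAt_pd1 hQ τ θ).deriv
  have hVth : ∀ τ θ : ℝ, deriv (fun y => V τ y) θ = pd2 V τ θ :=
    fun τ θ => (hasDerivAt_pd2 hV τ θ).deriv
  have hQth : ∀ τ θ : ℝ, deriv (fun y => Q τ y) θ = pd2 Q τ θ :=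
    fun τ θ => (hasDerivAt_pd2 hQ τ θ).deriv
  have hFsm := contDiff_FF hV hQ hρ
  have hGsm := contDiff_GG hV hQ hρ
  -- the integrand is `FF`
  have hI : ∀ τ : ℝ,
      (∫ θ in (0:ℝ)..(2 * π),
          Real.exp (ρ τ θ)
            * (deriv (fun s => V s θ) τ
              - Real.exp (2 * (V τ θ - τ)) * deriv (fun s => Q s θ) τ * Q τ θ))
        = ∫ θ in (0:ℝ)..(2 * π), FF V Q ρ τ θ := by
    intro τ
    refine intervalIntegral.integral_congr fun θ _ => ?_
    rw [hVt, hQt]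
    simp only [FF]
    rw [Real.exp_add]
    ring
  -- the PDE consequence : ∂τ FF = ∂θ GG
  have hkey : ∀ τ θ : ℝ, pd1 (FF V Q ρ) τ θ = pd2 (GG V Q ρ) τ θ := by
    intro τ θ
    have hVeq' : deriv (fun t => Real.exp (ρ t θ) * pd1 V t θ) τ
        = deriv (fun x => Real.exp (2 * τ - ρ τ x) * pd2 V τ x) θ
          + Real.exp (2 * (V τ θ - τ) + ρ τ θ)
            * ((pd1 Q τ θ) ^ 2 - Real.exp (2 * (τ - ρ τ θ)) * (pd2 Q τ θ) ^ 2) := by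
      have e1 : (fun t => Real.exp (ρ t θ) * pd1 V t θ)
          = fun t => Real.exp (ρ t θ) * deriv (fun s => V s θ) t :=
        funext fun t => by rw [hVt]
      have e2 : (fun x => Real.exp (2 * τ - ρ τ x) * pd2 V τ x)
          = fun x => Real.exp (2 * τ - ρ τ x) * deriv (fun y => V τ y) x :=
        funext fun x => by rw [hVth]
      rw [e1, e2, ← hQt τ θ, ← hQth τ θ]
      exact hVeq τ θ
    have hQeq' : deriv (fun t => Real.exp (ρ t θ + 2 * (V t θ - t)) * pd1 Q t θ) τ
        = deriv (fun x => Real.exp (-ρ τ x + 2 * V τ x) * pd2 Q τ x) θ := by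
      have e1 : (fun t => Real.exp (ρ t θ + 2 * (V t θ - t)) * pd1 Q t θ)
          = fun t => Real.exp (ρ t θ + 2 * (V t θ - t)) * deriv (fun s => Q s θ) t :=
        funext fun t => by rw [hQt]
      have e2 : (fun x => Real.exp (-ρ τ x + 2 * V τ x) * pd2 Q τ x)
          = fun x => Real.exp (-ρ τ x + 2 * V τ x) * deriv (fun y => Q τ y) x :=
        funext fun x => by rw [hQth]
      rw [e1, e2]
      exact hQeq τ θ
    -- differentiability in the first variable
    have dρ1 : DifferentiableAt ℝ (fun t => ρ t θ) τ := (hasDerivAt_pd1 hρ τ θ).differentiableAt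
    have dV1 : DifferentiableAt ℝ (fun t => V t θ) τ := (hasDerivAt_pd1 hV τ θ).differentiableAt
    have dpV1 : DifferentiableAt ℝ (fun t => pd1 V t θ) τ :=
      (hasDerivAt_pd1 (contDiff_pd1 hV) τ θ).differentiableAt
    have dpQ1 : DifferentiableAt ℝ (fun t => pd1 Q t θ) τ :=
      (hasDerivAt_pd1 (contDiff_pd1 hQ) τ θ).differentiableAt
    have ha : DifferentiableAt ℝ (fun t => Real.exp (ρ t θ) * pd1 V t θ) τ := dρ1.exp.mul dpV1
    have hb : DifferentiableAt ℝ (fun t => Real.exp (ρ t θ + 2 * (V t θ - t)) * pd1 Q t θ) τ :=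
      ((dρ1.add ((dV1.sub differentiableAt_id).const_mul 2)).exp).mul dpQ1
    have hcQ : HasDerivAt (fun t => Q t θ) (pd1 Q τ θ) τ := hasDerivAt_pd1 hQ τ θ
    have hFt : HasDerivAt (fun t => FF V Q ρ t θ)
        (deriv (fun t => Real.exp (ρ t θ) * pd1 V t θ) τ
          - (deriv (fun t => Real.exp (ρ t θ + 2 * (V t θ - t)) * pd1 Q t θ) τ * Q τ θ
            + Real.exp (ρ τ θ + 2 * (V τ θ - τ)) * pd1 Q τ θ * pd1 Q τ θ)) τ :=
      ha.hasDerivAt.sub (hb.hasDerivAt.mul hcQ)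
    -- differentiability in the second variable
    have dρ2 : DifferentiableAt ℝ (fun x => ρ τ x) θ := (hasDerivAt_pd2 hρ τ θ).differentiableAt
    have dV2 : DifferentiableAt ℝ (fun x => V τ x) θ := (hasDerivAt_pd2 hV τ θ).differentiableAt
    have dpV2 : DifferentiableAt ℝ (fun x => pd2 V τ x) θ :=
      (hasDerivAt_pd2 (contDiff_pd2 hV) τ θ).differentiableAt
    have dpQ2 : DifferentiableAt ℝ (fun x => pd2 Q τ x) θ :=
      (hasDerivAt_pd2 (contDiff_pd2 hQ) τ θ).differentiableAt
    have hu : DifferentiableAt ℝ (fun x => Real.exp (2 * τ - ρ τ x) * pd2 V τ x) θ :=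
      (((differentiableAt_const _).sub dρ2).exp).mul dpV2
    have hw : DifferentiableAt ℝ (fun x => Real.exp (-ρ τ x + 2 * V τ x) * pd2 Q τ x) θ :=
      ((dρ2.neg.add (dV2.const_mul 2)).exp).mul dpQ2
    have hcQ2 : HasDerivAt (fun y => Q τ y) (pd2 Q τ θ) θ := hasDerivAt_pd2 hQ τ θ
    have hGt : HasDerivAt (fun y => GG V Q ρ τ y)
        (deriv (fun x => Real.exp (2 * τ - ρ τ x) * pd2 V τ x) θ
          - (deriv (fun x => Real.exp (-ρ τ x + 2 * V τ x) * pd2 Q τ x) θ * Q τ θ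
            + Real.exp (-ρ τ θ + 2 * V τ θ) * pd2 Q τ θ * pd2 Q τ θ)) θ :=
      hu.hasDerivAt.sub (hw.hasDerivAt.mul hcQ2)
    have h1 := (hasDerivAt_pd1 hFsm τ θ).unique hFt
    have h2 := (hasDerivAt_pd2 hGsm τ θ).unique hGt
    rw [h1, h2, hVeq', hQeq']
    have e1 : Real.exp (2 * (V τ θ - τ) + ρ τ θ) = Real.exp (ρ τ θ + 2 * (V τ θ - τ)) := by
      congr 1; ring
    have e2 : Real.exp (2 * (V τ θ - τ) + ρ τ θ) * Real.exp (2 * (τ - ρ τ θ))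
        = Real.exp (-ρ τ θ + 2 * V τ θ) := by
      rw [← Real.exp_add]; congr 1; ring
    linear_combination (pd1 Q τ θ) ^ 2 * e1 - (pd2 Q τ θ) ^ 2 * e2
  -- periodicity of GG in θ
  have hGper : ∀ τ θ : ℝ, GG V Q ρ τ (θ + 2 * π) = GG V Q ρ τ θ := by
    intro τ θ
    have pV : pd2 V τ (θ + 2 * π) = pd2 V τ θ := by
      rw [← hVth, ← hVth, periodic_deriv (hVper τ)]
    have pQ : pd2 Q τ (θ + 2 * π) = pd2 Q τ θ := by
      rw [← hQth, ← hQth, periodic_deriv (hQper τ)]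
    have pV' : V τ (θ + 2 * π) = V τ θ := hVper τ θ
    have pQ' : Q τ (θ + 2 * π) = Q τ θ := hQper τ θ
    have pρ' : ρ τ (θ + 2 * π) = ρ τ θ := hρper τ θ
    simp only [GG, pV, pQ, pV', pQ', pρ']
  -- the spatial integral of ∂θ GG vanishes
  have hGzero : ∀ τ : ℝ, (∫ θ in (0:ℝ)..(2 * π), pd2 (GG V Q ρ) τ θ) = 0 := by
    intro τ
    have hcont : Continuous (fun θ => pd2 (GG V Q ρ) τ θ) :=
      (contDiff_pd2 hGsm).continuous.comp (continuous_const.prodMk continuous_id)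
    rw [intervalIntegral.integral_eq_sub_of_hasDerivAt
        (fun θ _ => hasDerivAt_pd2 hGsm τ θ) (hcont.intervalIntegrable _ _)]
    rw [show (2 * π : ℝ) = 0 + 2 * π by ring, hGper τ 0, sub_self]
  -- main argument
  suffices key : ∀ a b : ℝ, a ≤ b →
      (∫ θ in (0:ℝ)..(2 * π), FF V Q ρ a θ) = ∫ θ in (0:ℝ)..(2 * π), FF V Q ρ b θ by
    rcases le_total τ₁ τ₂ with h | h
    · rw [hI τ₁, hI τ₂]; exact key _ _ h
    · rw [hI τ₁, hI τ₂]; exact (key _ _ h).symm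
  intro a b hab
  have hFθ : ∀ t : ℝ, Continuous (fun θ => FF V Q ρ t θ) := by
    intro t
    have h1 : Continuous (fun θ : ℝ => (t, θ)) := continuous_const.prodMk continuous_id
    simpa [Function.comp_def] using hFsm.continuous.comp h1
  have hpd1cont : Continuous (Function.uncurry fun θ t => pd1 (FF V Q ρ) t θ) :=
    (contDiff_pd1 hFsm).continuous.comp continuous_swap
  have FTC : ∀ θ : ℝ, FF V Q ρ b θ - FF V Q ρ a θ = ∫ t in a..b, pd1 (FF V Q ρ) t θ :=
    fun θ =>
      (intervalIntegral.integral_eq_sub_of_hasDerivAt (fun t _ => hasDerivAt_pd1 hFsm t θ)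
        (((contDiff_pd1 hFsm).continuous.comp
          (continuous_id.prodMk continuous_const)).intervalIntegrable a b)).symm
  have step1 : (∫ θ in (0:ℝ)..(2 * π), FF V Q ρ b θ) - ∫ θ in (0:ℝ)..(2 * π), FF V Q ρ a θ
      = ∫ θ in (0:ℝ)..(2 * π), (FF V Q ρ b θ - FF V Q ρ a θ) :=
    (intervalIntegral.integral_sub ((hFθ b).intervalIntegrable _ _)
      ((hFθ a).intervalIntegrable _ _)).symm
  have h2π : (0:ℝ) ≤ 2 * π := by positivity
  have hInt : Integrable (Function.uncurry fun θ t => pd1 (FF V Q ρ) t θ)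
      ((volume.restrict (Set.Ioc (0:ℝ) (2 * π))).prod (volume.restrict (Set.Ioc a b))) := by
    rw [Measure.prod_restrict]
    exact (hpd1cont.continuousOn.integrableOn_compact (isCompact_Icc.prod isCompact_Icc)).mono_set
      (Set.prod_mono Set.Ioc_subset_Icc_self Set.Ioc_subset_Icc_self)
  have inner0 : ∀ t : ℝ, (∫ θ in Set.Ioc (0:ℝ) (2 * π), pd1 (FF V Q ρ) t θ) = 0 := by
    intro t
    rw [← intervalIntegral.integral_of_le h2π]
    calc (∫ θ in (0:ℝ)..(2 * π), pd1 (FF V Q ρ) t θ)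
        = ∫ θ in (0:ℝ)..(2 * π), pd2 (GG V Q ρ) t θ :=
          intervalIntegral.integral_congr fun θ _ => hkey t θ
      _ = 0 := hGzero t
  have main : (∫ θ in (0:ℝ)..(2 * π), (FF V Q ρ b θ - FF V Q ρ a θ)) = 0 := by
    calc (∫ θ in (0:ℝ)..(2 * π), (FF V Q ρ b θ - FF V Q ρ a θ))
        = ∫ θ in (0:ℝ)..(2 * π), ∫ t in a..b, pd1 (FF V Q ρ) t θ :=
          intervalIntegral.integral_congr fun θ _ => FTC θ
      _ = ∫ θ in Set.Ioc (0:ℝ) (2 * π), ∫ t in Set.Ioc a b, pd1 (FF V Q ρ) t θ := by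
          rw [intervalIntegral.integral_of_le h2π]
          simp_rw [intervalIntegral.integral_of_le hab]
      _ = ∫ t in Set.Ioc a b, ∫ θ in Set.Ioc (0:ℝ) (2 * π), pd1 (FF V Q ρ) t θ :=
          MeasureTheory.integral_integral_swap hInt
      _ = ∫ t in Set.Ioc a b, (0:ℝ) :=
          integral_congr_ae (Filter.Eventually.of_forall fun t => inner0 t)
      _ = 0 := by simp
  linarith [step1.trans main]
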